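/- Let q be a real number with 0 < q < 1, and for each m ∈ ℕ set τ_m := ∑_{k=0}^{m} binom_q(m,k) (that is, τ_m = (1 ⊕_q 1)^m). Then for every complex x with |x| < 1/(1−q), the series sin_q(x(1 ⊕_q 1)) := ∑_{n=0}^{∞} (−1)^n τ_{2n+1} x^{2n+1}/[2n+1]_q! converges and 2·sin_q(x)·cos_q(x) = sin_q(x(1 ⊕_q 1)). -/

import Mathlib

open Filter Topology

/-- The `q`-basic number `[n]_q = (1 - q^n)/(1 - q)`. -/
noncomputable def qNum (q : ℝ) (n : ℕ) : ℝ := (1 - q ^ n) / (1 - q)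

/-- The `q`-factorial `[n]_q! = [1]_q [2]_q ⋯ [n]_q`, with `[0]_q! = 1`. -/
noncomputable def qFact (q : ℝ) (n : ℕ) : ℝ := ∏ j ∈ Finset.range n, qNum q (j + 1)

/-- The Gaussian binomial coefficient `[n]_q! / ([k]_q! [n-k]_q!)`. -/
noncomputable def qBinom (q : ℝ) (n k : ℕ) : ℝ := qFact q n / (qFact q k * qFact q (n - k))

/-- The `q`-exponential `e_q(z) = ∑ z^n / [n]_q!`. -/
noncomputable def qExp (q : ℝ) (z : ℂ) : ℂ := ∑' n : ℕ, z ^ n / (qFact q n : ℂ)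

/-- The `q`-sine `sin_q(z) = ∑ (-1)^n z^(2n+1) / [2n+1]_q!`. -/
noncomputable def qSin (q : ℝ) (z : ℂ) : ℂ :=
  ∑' n : ℕ, (-1 : ℂ) ^ n * z ^ (2 * n + 1) / (qFact q (2 * n + 1) : ℂ)

/-- The `q`-cosine `cos_q(z) = ∑ (-1)^n z^(2n) / [2n]_q!`. -/
noncomputable def qCos (q : ℝ) (z : ℂ) : ℂ :=
  ∑' n : ℕ, (-1 : ℂ) ^ n * z ^ (2 * n) / (qFact q (2 * n) : ℂ)

/-- The `q`-addition power `(x ⊕_q y)^n = ∑_{k=0}^n binom_q(n,k) x^k y^(n-k)`. -/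
noncomputable def qAddPow (q : ℝ) (x y : ℂ) (n : ℕ) : ℂ :=
  ∑ k ∈ Finset.range (n + 1), (qBinom q n k : ℂ) * x ^ k * y ^ (n - k)

/-- The `q`-subtraction power `(x ⊖_q y)^n = ∑_{k=0}^n binom_q(n,k) (-1)^(n-k) x^k y^(n-k)`. -/
noncomputable def qSubPow (q : ℝ) (x y : ℂ) (n : ℕ) : ℂ :=
  ∑ k ∈ Finset.range (n + 1), (qBinom q n k : ℂ) * (-1 : ℂ) ^ (n - k) * x ^ k * y ^ (n - k)

/-- The `q`-tangent `tan_q(z) = sin_q(z)/cos_q(z)`. -/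
noncomputable def qTan (q : ℝ) (z : ℂ) : ℂ := qSin q z / qCos q z

/-- The second `q`-exponential `E_q(z) = ∑ q^(n(n-1)/2) z^n / [n]_q!`. -/
noncomputable def qExpE (q : ℝ) (z : ℂ) : ℂ :=
  ∑' n : ℕ, (q : ℂ) ^ (n * (n - 1) / 2) * z ^ n / (qFact q n : ℂ)

/-!
Both `sin_q x` and `cos_q x` converge absolutely (ratio test: `[n]_q → 1/(1-q)`), so their
product is the Cauchy product. Its `N`-th term is `(-1)^N x^(2N+1) / [2N+1]_q!` times
`∑_{k ≤ N} binom_q(2N+1, 2k+1)`, and twice this sum is the full row sum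
`(1 ⊕_q 1)^(2N+1)`, because `binom_q(n, k) = binom_q(n, n-k)` exchanges even and odd `k`
when `n` is odd.
-/

open Finset

lemma sum_range_two_mul {M : Type*} [AddCommMonoid M] (f : ℕ → M) (n : ℕ) :
    ∑ k ∈ range (2 * n), f k = ∑ i ∈ range n, (f (2 * i) + f (2 * i + 1)) := by
  induction n with
  | zero => simp
  | succ n ih => rw [Nat.mul_succ, sum_range_succ, sum_range_succ, sum_range_succ, ih, add_assoc]

section QCalculus

variable {q : ℝ}

lemma qNum_pos (hq : |q| < 1) {n : ℕ} (hn : n ≠ 0) : 0 < qNum q n := by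
  have hqn : q ^ n < 1 :=
    (le_abs_self _).trans_lt (by rw [abs_pow]; exact pow_lt_one₀ (abs_nonneg q) hq hn)
  exact div_pos (by linarith) (by linarith [(abs_lt.mp hq).2])

lemma qFact_pos (hq : |q| < 1) (n : ℕ) : 0 < qFact q n :=
  prod_pos fun j _ => qNum_pos hq j.succ_ne_zero

lemma qFact_succ (n : ℕ) : qFact q (n + 1) = qFact q n * qNum q (n + 1) :=
  prod_range_succ _ _

lemma qBinom_symm {n k : ℕ} (hk : k ≤ n) : qBinom q n (n - k) = qBinom q n k := by
  rw [qBinom, qBinom, Nat.sub_sub_self hk, mul_comm]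

lemma inv_qFact_mul_inv_qFact (hq : |q| < 1) (a b : ℕ) :
    (qFact q a)⁻¹ * (qFact q b)⁻¹ = qBinom q (a + b) a / qFact q (a + b) := by
  have := qFact_pos hq a
  have := qFact_pos hq b
  have := qFact_pos hq (a + b)
  rw [qBinom, Nat.add_sub_cancel_left]
  field_simp

lemma tendsto_qNum_atTop (hq : |q| < 1) : Tendsto (qNum q) atTop (𝓝 (1 / (1 - q))) := by
  have h := ((tendsto_pow_atTop_nhds_zero_of_abs_lt_one hq).const_sub 1).div_const (1 - q)
  rw [sub_zero] at h
  exact h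

lemma summable_pow_div_qFact (hq : |q| < 1) {r : ℝ} (hr0 : 0 ≤ r) (hr : r < 1 / (1 - q)) :
    Summable fun n => r ^ n / qFact q n := by
  have hq1 : 0 < 1 - q := by linarith [(abs_lt.mp hq).2]
  obtain ⟨c, hrc, hc1⟩ := exists_between ((lt_div_iff₀ hq1).mp hr)
  have hratio : Tendsto (fun n => r / qNum q (n + 1)) atTop (𝓝 (r * (1 - q))) := by
    have h := (tendsto_const_nhds (x := r)).div
      ((tendsto_qNum_atTop hq).comp (tendsto_add_atTop_nat 1)) (one_div_ne_zero hq1.ne')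
    rwa [div_div_eq_mul_div, div_one] at h
  refine summable_of_ratio_norm_eventually_le hc1 ?_
  filter_upwards [hratio.eventually_le_const hrc] with n hn
  have := qFact_pos hq n
  have := qFact_pos hq (n + 1)
  have := qNum_pos hq n.succ_ne_zero
  rw [Real.norm_of_nonneg (by positivity), Real.norm_of_nonneg (by positivity), qFact_succ,
    pow_succ, mul_div_mul_comm, mul_comm]
  exact mul_le_mul_of_nonneg_right hn (by positivity)

lemma summable_norm_neg_one_pow_mul_pow_div_qFact (hq : |q| < 1) {z : ℂ} (hz : ‖z‖ < 1 / (1 - q))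
    {e : ℕ → ℕ} (he : Function.Injective e) :
    Summable fun n => ‖(-1 : ℂ) ^ n * z ^ e n / (qFact q (e n) : ℂ)‖ := by
  refine ((summable_pow_div_qFact hq (norm_nonneg z) hz).comp_injective he).congr fun n => ?_
  simp [Complex.norm_real, abs_of_pos (qFact_pos hq _)]

lemma sum_qBinom_eq_two_mul_sum_qBinom_odd (N : ℕ) :
    ∑ k ∈ range (2 * N + 1 + 1), qBinom q (2 * N + 1) k
      = 2 * ∑ n ∈ range (N + 1), qBinom q (2 * N + 1) (2 * n + 1) := by
  have heven : ∑ n ∈ range (N + 1), qBinom q (2 * N + 1) (2 * n)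
      = ∑ n ∈ range (N + 1), qBinom q (2 * N + 1) (2 * n + 1) := by
    rw [← sum_range_reflect]
    refine sum_congr rfl fun n hn => ?_
    have hn : n ≤ N := Nat.lt_succ_iff.mp (mem_range.mp hn)
    rw [← qBinom_symm (by omega : 2 * n + 1 ≤ 2 * N + 1)]
    congr 1
    omega
  rw [show 2 * N + 1 + 1 = 2 * (N + 1) by ring, sum_range_two_mul, sum_add_distrib, heven]
  ring

lemma qSin_term_mul_qCos_term (hq : |q| < 1) (x : ℂ) (a b : ℕ) :
    (-1 : ℂ) ^ a * x ^ (2 * a + 1) / (qFact q (2 * a + 1) : ℂ)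
        * ((-1 : ℂ) ^ b * x ^ (2 * b) / (qFact q (2 * b) : ℂ))
      = (-1 : ℂ) ^ (a + b) * x ^ (2 * (a + b) + 1) / (qFact q (2 * (a + b) + 1) : ℂ)
        * (qBinom q (2 * (a + b) + 1) (2 * a + 1) : ℂ) := by
  have h := inv_qFact_mul_inv_qFact hq (2 * a + 1) (2 * b)
  rw [show 2 * a + 1 + 2 * b = 2 * (a + b) + 1 by ring] at h
  have hc : ((qFact q (2 * a + 1) : ℂ))⁻¹ * ((qFact q (2 * b) : ℂ))⁻¹
      = (qBinom q (2 * (a + b) + 1) (2 * a + 1) : ℂ) / (qFact q (2 * (a + b) + 1) : ℂ) := by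
    exact_mod_cast h
  calc _ = (-1 : ℂ) ^ (a + b) * x ^ (2 * (a + b) + 1)
        * (((qFact q (2 * a + 1) : ℂ))⁻¹ * ((qFact q (2 * b) : ℂ))⁻¹) := by ring
    _ = _ := by rw [hc]; ring

lemma qAddPow_one_one (n : ℕ) :
    qAddPow q 1 1 n = ((∑ k ∈ range (n + 1), qBinom q n k : ℝ) : ℂ) := by
  simp [qAddPow]

lemma two_mul_sum_qSin_term_mul_qCos_term (hq : |q| < 1) (x : ℂ) (N : ℕ) :
    2 * ∑ k ∈ range (N + 1), (-1 : ℂ) ^ k * x ^ (2 * k + 1) / (qFact q (2 * k + 1) : ℂ)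
        * ((-1 : ℂ) ^ (N - k) * x ^ (2 * (N - k)) / (qFact q (2 * (N - k)) : ℂ))
      = (-1 : ℂ) ^ N * qAddPow q 1 1 (2 * N + 1) * x ^ (2 * N + 1)
        / (qFact q (2 * N + 1) : ℂ) := by
  have hterm : ∀ k ∈ range (N + 1),
      (-1 : ℂ) ^ k * x ^ (2 * k + 1) / (qFact q (2 * k + 1) : ℂ)
        * ((-1 : ℂ) ^ (N - k) * x ^ (2 * (N - k)) / (qFact q (2 * (N - k)) : ℂ))
      = (-1 : ℂ) ^ N * x ^ (2 * N + 1) / (qFact q (2 * N + 1) : ℂ)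
        * (qBinom q (2 * N + 1) (2 * k + 1) : ℂ) := by
    intro k hk
    rw [qSin_term_mul_qCos_term hq, Nat.add_sub_cancel' (Nat.lt_succ_iff.mp (mem_range.mp hk))]
  rw [sum_congr rfl hterm, ← mul_sum, qAddPow_one_one, sum_qBinom_eq_two_mul_sum_qBinom_odd]
  push_cast
  ring

end QCalculus

/-- `2 sin_q(x) cos_q(x) = sin_q(x (1 ⊕_q 1))`, where the right-hand series is
`∑ (-1)^n (1 ⊕_q 1)^{2n+1} x^{2n+1} / [2n+1]_q!`. -/
theorem two_qSin_qCos (q : ℝ) (hq0 : 0 < q) (hq1 : q < 1) (x : ℂ)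
    (hx : ‖x‖ < 1 / (1 - q)) :
    HasSum
      (fun n : ℕ =>
        (-1 : ℂ) ^ n * qAddPow q 1 1 (2 * n + 1) * x ^ (2 * n + 1) / (qFact q (2 * n + 1) : ℂ))
      (2 * qSin q x * qCos q x) := by
  have hq : |q| < 1 := abs_lt.mpr ⟨by linarith, hq1⟩
  have hsin : Summable fun n => ‖(-1 : ℂ) ^ n * x ^ (2 * n + 1) / (qFact q (2 * n + 1) : ℂ)‖ :=
    summable_norm_neg_one_pow_mul_pow_div_qFact hq hx fun a b h => by simpa using h
  have hcos : Summable fun n => ‖(-1 : ℂ) ^ n * x ^ (2 * n) / (qFact q (2 * n) : ℂ)‖ :=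
    summable_norm_neg_one_pow_mul_pow_div_qFact hq hx fun a b h => by simpa using h
  have hprod := (hasSum_sum_range_mul_of_summable_norm hsin hcos).mul_left 2
  simp only [two_mul_sum_qSin_term_mul_qCos_term hq] at hprod
  rwa [← mul_assoc] at hprod
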